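/- arXiv:2006.14838 — 6 statements merged into one kernel-verified Lean document; each statement's English description precedes it below -/
import Mathlib

section
/- Consider a causal finite W-game and a player p enjoying perfect recall, with configuration-ordering φ. Fix an agent a of player p and an atom G_a of the information field ℐ_a. Then there exists a unique ordering κ₀ ∈ Σ with last(κ₀) = a and G_a ⊆ H_{κ₀}^φ. -/
open scoped BigOperators
attribute [local instance] Classical.propDecidable

def IsSetField {D : Type*} (F : Set (Set D)) : Prop :=
  Set.univ ∈ F ∧ (∀ s ∈ F, sᶜ ∈ F) ∧ ∀ s ∈ F, ∀ t ∈ F, s ∪ t ∈ F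

def IsSetAtom {D : Type*} (F : Set (Set D)) (G : Set D) : Prop :=
  G ∈ F ∧ G ≠ ∅ ∧ ∀ K ∈ F, K ⊆ G → K = ∅ ∨ K = G

def Meas {D α : Type*} (F : Set (Set D)) (f : D → α) : Prop :=
  ∀ x : α, f ⁻¹' {x} ∈ F

/-- The field generated by a collection of subsets: the intersection of all fields
containing it. -/
def genField {D : Type*} (S : Set (Set D)) : Set (Set D) :=
  {X | ∀ F : Set (Set D), IsSetField F → S ⊆ F → X ∈ F}

section WModel

variable {Ω A : Type*} {U : A → Type*}

/-- The cylinder field `𝔘_{{b}}` on the decision coordinate of agent `b`. -/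
def cylField (Ω : Type*) (U : A → Type*) (b : A) : Set (Set (Ω × ∀ c, U c)) :=
  {X | ∃ V : Set (U b), X = {h | h.2 b ∈ V}}

/-- The field `ℋ_B` of sets depending only on Nature and the decisions of agents in `B`. -/
def dependsOnField (Ω : Type*) (U : A → Type*) (B : Set A) : Set (Set (Ω × ∀ c, U c)) :=
  {X | ∀ h h' : Ω × ∀ c, U c, h.1 = h'.1 → (∀ b ∈ B, h.2 b = h'.2 b) → h ∈ X → h' ∈ X}

variable [Fintype A]

/-- `H_κ^φ`: configurations whose ordering `φ h` restricted to the first `p.1` stages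
equals the (partial) ordering `p`. -/
def Hset (φ : (Ω × ∀ c, U c) → Fin (Fintype.card A) → A) (p : Σ k : ℕ, Fin k → A) :
    Set (Ω × ∀ c, U c) :=
  {h | ∀ i : Fin p.1, ∃ hi : i.1 < Fintype.card A, p.2 i = φ h ⟨i.1, hi⟩}

/-- The range of the ordering `p` deprived of its last element. -/
def predRange (p : Σ k : ℕ, Fin k → A) : Set A :=
  {b | ∃ i : Fin p.1, (i : ℕ) < p.1 - 1 ∧ p.2 i = b}

/-- Causality of a W-model with respect to the configuration-ordering `φ`. -/
def Causal (φ : (Ω × ∀ c, U c) → Fin (Fintype.card A) → A)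
    (I : A → Set (Set (Ω × ∀ c, U c))) : Prop :=
  ∀ p : Σ k : ℕ, Fin k → A, Function.Injective p.2 →
    ∀ hpos : p.1 - 1 < p.1, ∀ X ∈ I (p.2 ⟨p.1 - 1, hpos⟩),
      Hset φ p ∩ X ∈ dependsOnField Ω U (predRange p)

/-- Perfect recall of the player whose executive agents form the set `Ap`. -/
def PerfectRecall (φ : (Ω × ∀ c, U c) → Fin (Fintype.card A) → A)
    (I : A → Set (Set (Ω × ∀ c, U c))) (Ap : Set A) : Prop :=
  ∀ p : Σ k : ℕ, Fin k → A, Function.Injective p.2 →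
    ∀ hpos : p.1 - 1 < p.1, p.2 ⟨p.1 - 1, hpos⟩ ∈ Ap →
      ∀ X ∈ genField (⋃ b ∈ predRange p ∩ Ap, cylField Ω U b ∪ I b),
        Hset φ p ∩ X ∈ I (p.2 ⟨p.1 - 1, hpos⟩)

end WModel

theorem atom_in_unique_Hset {Ω A : Type*} [Fintype Ω] [Fintype A]
    {U : A → Type*} [∀ c, Fintype (U c)]
    (I : A → Set (Set (Ω × ∀ c, U c))) (hI : ∀ c, IsSetField (I c))
    (φ : (Ω × ∀ c, U c) → Fin (Fintype.card A) → A)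
    (hφ : ∀ h, Function.Bijective (φ h))
    (hc : Causal φ I) (Ap : Set A) (hpr : PerfectRecall φ I Ap)
    (a : A) (ha : a ∈ Ap)
    (G : Set (Ω × ∀ c, U c)) (hG : IsSetAtom (I a) G) :
    ∃! p : Σ k : ℕ, Fin k → A,
      Function.Injective p.2 ∧
      (∃ hpos : p.1 - 1 < p.1, p.2 ⟨p.1 - 1, hpos⟩ = a) ∧
      G ⊆ Hset φ p := by
  classical
  obtain ⟨hGI, hGne, hGatom⟩ := hG
  obtain ⟨h₀, hh₀⟩ := Set.nonempty_iff_ne_empty.2 hGne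
  obtain ⟨j, hj⟩ := (hφ h₀).2 a
  set p₀ : Σ k : ℕ, Fin k → A :=
    ⟨j.1 + 1, fun i => φ h₀ ⟨i.1, lt_of_le_of_lt (Nat.lt_succ_iff.mp i.2) j.2⟩⟩ with hp₀
  have hinj : Function.Injective p₀.2 := by
    intro i i' h
    have := congrArg Fin.val ((hφ h₀).1 h)
    exact Fin.ext this
  have hpos : p₀.1 - 1 < p₀.1 := by simp [hp₀]
  have hlast : p₀.2 ⟨p₀.1 - 1, hpos⟩ = a := by
    have : (⟨(⟨p₀.1 - 1, hpos⟩ : Fin p₀.1).1,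
        lt_of_le_of_lt (Nat.lt_succ_iff.mp (⟨p₀.1 - 1, hpos⟩ : Fin p₀.1).2) j.2⟩ : Fin (Fintype.card A)) = j := by
      apply Fin.ext; simp [hp₀]
    show φ h₀ _ = a
    rw [this]; exact hj
  have hh₀H : h₀ ∈ Hset φ p₀ := by
    intro i
    exact ⟨lt_of_le_of_lt (Nat.lt_succ_iff.mp i.2) j.2, rfl⟩
  -- Hset φ p₀ ∈ I a via perfect recall with X = univ
  have huniv : (Set.univ : Set (Ω × ∀ c, U c)) ∈
      genField (⋃ b ∈ predRange p₀ ∩ Ap, cylField Ω U b ∪ I b) :=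
    fun F hF _ => hF.1
  have hHI : Hset φ p₀ ∈ I a := by
    have := hpr p₀ hinj hpos (by rw [hlast]; exact ha) Set.univ huniv
    rw [Set.inter_univ, hlast] at this
    exact this
  -- intersection closure
  have hint : ∀ s ∈ I a, ∀ t ∈ I a, s ∩ t ∈ I a := by
    intro s hs t ht
    have h1 := (hI a).2.2 sᶜ ((hI a).2.1 s hs) tᶜ ((hI a).2.1 t ht)
    have h2 := (hI a).2.1 _ h1
    simpa [Set.compl_union, compl_compl] using h2
  have hK : G ∩ Hset φ p₀ ∈ I a := hint G hGI _ hHI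
  have hKG : G ∩ Hset φ p₀ = G := by
    rcases hGatom _ hK Set.inter_subset_left with h | h
    · exact absurd h (by
        apply Set.nonempty_iff_ne_empty.1
        exact ⟨h₀, hh₀, hh₀H⟩)
    · exact h
  have hGsub : G ⊆ Hset φ p₀ := Set.inter_eq_left.mp hKG
  refine ⟨p₀, ⟨hinj, ⟨hpos, hlast⟩, hGsub⟩, ?_⟩
  rintro ⟨k, f⟩ ⟨hqinj, ⟨hqpos, hqlast⟩, hqsub⟩
  have hh₀q := hqsub hh₀
  obtain ⟨hi, heq⟩ := hh₀q ⟨k - 1, hqpos⟩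
  have hja : φ h₀ ⟨k - 1, hi⟩ = φ h₀ j := by
    rw [← heq, hqlast, hj]
  have hk1 : k - 1 = j.1 := congrArg Fin.val ((hφ h₀).1 hja)
  have hqpos' : k - 1 < k := hqpos
  have hk : k = j.1 + 1 := by omega
  subst hk
  rw [hp₀]
  exact Sigma.ext rfl (heq_of_eq (funext fun i => (hh₀q i).choose_spec))
end

section
/- Consider a causal finite W-game and a player p enjoying perfect recall, with configuration-ordering φ. Fix an agent a ∈ A^p, an atom G_a of ℐ_a, and let κ₀ be the unique ordering with last(κ₀)=a and G_a ⊆ H_{κ₀}^φ. Then any two configurations h', h'' ∈ G_a agree on the coordinates of all agents b ∈ range(κ₀′) ∩ A^p, where κ₀′ is κ₀ with its last element removed; i.e. h'_b = h''_b for all such b. -/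
open scoped BigOperators
attribute [local instance] Classical.propDecidable

theorem perfect_recall_atoms_agree_on_past_decisions {Ω A : Type*} [Fintype Ω] [Fintype A]
    {U : A → Type*} [∀ c, Fintype (U c)]
    (I : A → Set (Set (Ω × ∀ c, U c))) (hI : ∀ c, IsSetField (I c))
    (φ : (Ω × ∀ c, U c) → Fin (Fintype.card A) → A)
    (hφ : ∀ h, Function.Bijective (φ h))
    (hc : Causal φ I) (Ap : Set A) (hpr : PerfectRecall φ I Ap)
    (a : A) (ha : a ∈ Ap)
    (G : Set (Ω × ∀ c, U c)) (hG : IsSetAtom (I a) G)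
    (p₀ : Σ k : ℕ, Fin k → A) (hinj : Function.Injective p₀.2)
    (hlast : ∃ hpos : p₀.1 - 1 < p₀.1, p₀.2 ⟨p₀.1 - 1, hpos⟩ = a)
    (hGsub : G ⊆ Hset φ p₀) :
    ∀ h' ∈ G, ∀ h'' ∈ G, ∀ b ∈ predRange p₀ ∩ Ap, h'.2 b = h''.2 b := by
  intro h' hh' h'' hh'' b hb
  obtain ⟨hpos, hla⟩ := hlast
  -- cylinder set fixing coordinate b to h'.2 b
  set X : Set (Ω × ∀ c, U c) := {h | h.2 b ∈ ({h'.2 b} : Set (U b))} with hX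
  have hXgen : X ∈ genField (⋃ c ∈ predRange p₀ ∩ Ap, cylField Ω U c ∪ I c) := by
    intro F hF hSF
    apply hSF
    refine Set.mem_biUnion hb ?_
    exact Or.inl ⟨{h'.2 b}, rfl⟩
  have hHX : Hset φ p₀ ∩ X ∈ I a := by
    have := hpr p₀ hinj hpos (by rw [hla]; exact ha) X hXgen
    rwa [hla] at this
  -- intersection closure of the field I a
  obtain ⟨huniv, hcompl, hunion⟩ := hI a
  have hGX : G ∩ (Hset φ p₀ ∩ X) ∈ I a := by
    have h1 : (Gᶜ ∪ (Hset φ p₀ ∩ X)ᶜ) ∈ I a :=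
      hunion _ (hcompl _ hG.1) _ (hcompl _ hHX)
    have h2 := hcompl _ h1
    rwa [Set.compl_union, compl_compl, compl_compl] at h2
  have hsub : G ∩ (Hset φ p₀ ∩ X) ⊆ G := Set.inter_subset_left
  rcases hG.2.2 _ hGX hsub with hE | hEq
  · exfalso
    have : h' ∈ G ∩ (Hset φ p₀ ∩ X) := ⟨hh', hGsub hh', rfl⟩
    rw [hE] at this
    exact this
  · have : h'' ∈ G ∩ (Hset φ p₀ ∩ X) := by rw [hEq]; exact hh''
    exact (this.2.2 : h''.2 b ∈ ({h'.2 b} : Set (U b))).symm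
end

section
/- Consider a causal finite W-game and a player p enjoying perfect recall, with configuration-ordering φ. Fix agent a ∈ A^p, atom G_a of ℐ_a, and the unique κ₀ with last(κ₀)=a and G_a ⊆ H_{κ₀}^φ. Then for every agent b ∈ range(κ₀′) ∩ A^p (κ₀′ = κ₀ minus its last element) and every atom G_b of ℐ_b, either G_a ∩ G_b = ∅ or G_a ⊆ G_b. -/
open scoped BigOperators
attribute [local instance] Classical.propDecidable

theorem perfect_recall_atoms_agree_on_past_information {Ω A : Type*} [Fintype Ω] [Fintype A]
    {U : A → Type*} [∀ c, Fintype (U c)]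
    (I : A → Set (Set (Ω × ∀ c, U c))) (hI : ∀ c, IsSetField (I c))
    (φ : (Ω × ∀ c, U c) → Fin (Fintype.card A) → A)
    (hφ : ∀ h, Function.Bijective (φ h))
    (hc : Causal φ I) (Ap : Set A) (hpr : PerfectRecall φ I Ap)
    (a : A) (ha : a ∈ Ap)
    (G : Set (Ω × ∀ c, U c)) (hG : IsSetAtom (I a) G)
    (p₀ : Σ k : ℕ, Fin k → A) (hinj : Function.Injective p₀.2)
    (hlast : ∃ hpos : p₀.1 - 1 < p₀.1, p₀.2 ⟨p₀.1 - 1, hpos⟩ = a)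
    (hGsub : G ⊆ Hset φ p₀) :
    ∀ b ∈ predRange p₀ ∩ Ap, ∀ Gb : Set (Ω × ∀ c, U c),
      IsSetAtom (I b) Gb → G ∩ Gb = ∅ ∨ G ⊆ Gb := by
  intro b hb Gb hGb
  obtain ⟨hpos, hpa⟩ := hlast
  -- Gb is in the generated field
  have hGbgen : Gb ∈ genField (⋃ c ∈ predRange p₀ ∩ Ap, cylField Ω U c ∪ I c) := by
    intro F hF hSF
    apply hSF
    exact Set.mem_biUnion hb (Or.inr hGb.1)
  have hHGb : Hset φ p₀ ∩ Gb ∈ I a := by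
    have := hpr p₀ hinj hpos (hpa ▸ ha) Gb hGbgen
    rwa [hpa] at this
  -- intersection closure of the field I a
  obtain ⟨huniv, hcompl, hunion⟩ := hI a
  have hK : G ∩ (Hset φ p₀ ∩ Gb) ∈ I a := by
    have h1 : (Gᶜ ∪ (Hset φ p₀ ∩ Gb)ᶜ)ᶜ ∈ I a :=
      hcompl _ (hunion _ (hcompl _ hG.1) _ (hcompl _ hHGb))
    rwa [Set.compl_union, compl_compl, compl_compl] at h1
  have hsub : G ∩ (Hset φ p₀ ∩ Gb) ⊆ G := Set.inter_subset_left
  rcases hG.2.2 _ hK hsub with h | h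
  · left
    have : G ∩ Gb ⊆ G ∩ (Hset φ p₀ ∩ Gb) := fun x hx =>
      ⟨hx.1, hGsub hx.1, hx.2⟩
    exact Set.subset_empty_iff.mp (h ▸ this)
  · right
    intro x hx
    have : x ∈ G ∩ (Hset φ p₀ ∩ Gb) := by rw [h]; exact hx
    exact this.2.2
end

section
/- Consider a causal finite W-game and a player p enjoying perfect recall. For each agent a ∈ A^p and each mixed W-strategy μ^p ∈ Δ(Λ^p) (a probability on the finite set Λ^p = ∏_{b∈A^p} Λ_b of pure strategy profiles of p's agents), define, for h ∈ H and u ∈ U_a, the conditional kernel β_a(u|h) = μ^p{ λ : h ∈ H_κ^φ, last(κ)=a, λ_a(h)=u, λ_b(h)=h_b ∀ b ∈ range(κ′)∩A^p } / μ^p{ λ : h ∈ H_κ^φ, last(κ)=a, λ_b(h)=h_b ∀ b ∈ range(κ′)∩A^p }, with value 0 when the denominator vanishes, where κ is the unique ordering with h ∈ H_κ^φ and last(κ)=a. Then, for each fixed u ∈ U_a, the function h ↦ β_a(u|h) is ℐ_a-measurable, and β_a(·|h) sums to one whenever the denominator is positive. -/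
open scoped BigOperators
attribute [local instance] Classical.propDecidable

section Kernel

variable {Ω A : Type*} [Fintype Ω] [Fintype A] {U : A → Type*} [∀ c, Fintype (U c)]

/-- Pure W-strategy profiles of the player whose executive agents form `Ap`. -/
def ProfT (Ω : Type*) (U : A → Type*) (I : A → Set (Set (Ω × ∀ c, U c))) (Ap : Set A) :=
  ∀ b : {b : A // b ∈ Ap}, {f : (Ω × ∀ c, U c) → U b.1 // Meas (I b.1) f}

noncomputable instance (I : A → Set (Set (Ω × ∀ c, U c))) (Ap : Set A) :
    Fintype (ProfT Ω U I Ap) := by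
  unfold ProfT; infer_instance

/-- Denominator of the conditional kernel: the probability, under `μp`, that the
strategies of the agents of the player preceding `a` (i.e. preceding stage `idx h`
in the ordering `φ h`) are consistent with the configuration `h`. -/
noncomputable def denom (I : A → Set (Set (Ω × ∀ c, U c))) (Ap : Set A)
    (μp : ProfT Ω U I Ap → ℝ)
    (φ : (Ω × ∀ c, U c) → Fin (Fintype.card A) → A)
    (idx : (Ω × ∀ c, U c) → Fin (Fintype.card A))
    (h : Ω × ∀ c, U c) : ℝ :=
  ∑ lam : ProfT Ω U I Ap,
    if (∀ b : {b : A // b ∈ Ap},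
        (∃ i, i < idx h ∧ φ h i = b.1) → (lam b).1 h = h.2 b.1)
    then μp lam else 0

/-- Numerator of the conditional kernel: same event, intersected with the event
that agent `a` chooses `u` at `h`. -/
noncomputable def numer (I : A → Set (Set (Ω × ∀ c, U c))) (Ap : Set A)
    (μp : ProfT Ω U I Ap → ℝ)
    (φ : (Ω × ∀ c, U c) → Fin (Fintype.card A) → A)
    (idx : (Ω × ∀ c, U c) → Fin (Fintype.card A))
    (a : A) (ha : a ∈ Ap) (u : U a) (h : Ω × ∀ c, U c) : ℝ :=
  ∑ lam : ProfT Ω U I Ap,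
    if ((lam ⟨a, ha⟩).1 h = u ∧
        ∀ b : {b : A // b ∈ Ap},
          (∃ i, i < idx h ∧ φ h i = b.1) → (lam b).1 h = h.2 b.1)
    then μp lam else 0

end Kernel


section Aux

lemma IsSetField.inter' {D : Type*} {F : Set (Set D)} (hF : IsSetField F)
    {s t : Set D} (hs : s ∈ F) (ht : t ∈ F) : s ∩ t ∈ F := by
  have h1 := hF.2.2 sᶜ (hF.2.1 s hs) tᶜ (hF.2.1 t ht)
  have h2 := hF.2.1 _ h1
  simpa [Set.compl_union] using h2

lemma IsSetField.empty' {D : Type*} {F : Set (Set D)} (hF : IsSetField F) :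
    (∅ : Set D) ∈ F := by
  have := hF.2.1 _ hF.1
  simpa using this

lemma IsSetField.biInter' {D ι : Type*} {F : Set (Set D)} (hF : IsSetField F)
    (s : Finset ι) (T : ι → Set D) (h : ∀ i ∈ s, T i ∈ F) : (⋂ i ∈ s, T i) ∈ F := by
  classical
  induction s using Finset.induction_on with
  | empty => simpa using hF.1
  | @insert x s hx ih =>
      rw [Finset.set_biInter_insert]
      exact hF.inter' (h x (Finset.mem_insert_self x s))
        (ih (fun i hi => h i (Finset.mem_insert_of_mem hi)))

lemma IsSetField.biUnion' {D ι : Type*} {F : Set (Set D)} (hF : IsSetField F)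
    (s : Finset ι) (T : ι → Set D) (h : ∀ i ∈ s, T i ∈ F) : (⋃ i ∈ s, T i) ∈ F := by
  classical
  induction s using Finset.induction_on with
  | empty => simpa using hF.empty'
  | @insert x s hx ih =>
      rw [Finset.set_biUnion_insert]
      exact hF.2.2 _ (h x (Finset.mem_insert_self x s)) _
        (ih (fun i hi => h i (Finset.mem_insert_of_mem hi)))

lemma isSetField_genField {D : Type*} (S : Set (Set D)) : IsSetField (genField S) :=
  ⟨fun F hF _ => hF.1,
   fun s hs F hF hSF => hF.2.1 s (hs F hF hSF),
   fun s hs t ht F hF hSF => hF.2.2 s (hs F hF hSF) t (ht F hF hSF)⟩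

lemma subset_genField {D : Type*} (S : Set (Set D)) : S ⊆ genField S :=
  fun _X hX _F _hF hSF => hSF hX

lemma atom_mem_trans {D : Type*} {F : Set (Set D)} (hF : IsSetField F) {G K : Set D}
    (hG : IsSetAtom F G) (hK : K ∈ F) {h' h'' : D}
    (h1 : h' ∈ G) (h2 : h' ∈ K) (h3 : h'' ∈ G) : h'' ∈ K := by
  have hGK : G ∩ K ∈ F := hF.inter' hG.1 hK
  rcases hG.2.2 _ hGK Set.inter_subset_left with he | he
  · exact absurd (Set.mem_inter h1 h2) (by simp [he])
  · have h4 : h'' ∈ G ∩ K := by rw [he]; exact h3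
    exact h4.2

lemma cond_transfer
    {Ω A : Type*} [Fintype Ω] [Fintype A] {U : A → Type*} [∀ c, Fintype (U c)]
    (I : A → Set (Set (Ω × ∀ c, U c))) (hI : ∀ c, IsSetField (I c))
    (φ : (Ω × ∀ c, U c) → Fin (Fintype.card A) → A)
    (hφ : ∀ h, Function.Bijective (φ h))
    (Ap : Set A) (hpr : PerfectRecall φ I Ap)
    (a : A) (ha : a ∈ Ap)
    (idx : (Ω × ∀ c, U c) → Fin (Fintype.card A))
    (hidx : ∀ h, φ h (idx h) = a)
    (lam : ProfT Ω U I Ap)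
    (G : Set (Ω × ∀ c, U c)) (hG : IsSetAtom (I a) G)
    (h' h'' : Ω × ∀ c, U c) (hh' : h' ∈ G) (hh'' : h'' ∈ G)
    (hcnd : ∀ b : {b : A // b ∈ Ap},
      (∃ i, i < idx h' ∧ φ h' i = b.1) → (lam b).1 h' = h'.2 b.1) :
    ∀ b : {b : A // b ∈ Ap},
      (∃ i, i < idx h'' ∧ φ h'' i = b.1) → (lam b).1 h'' = h''.2 b.1 := by
  classical
  set n : ℕ := (idx h').1 with hn
  have hnlt : n < Fintype.card A := (idx h').2
  have hq : ∀ i : Fin (n+1), (i : ℕ) < Fintype.card A :=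
    fun i => Nat.lt_of_le_of_lt (Nat.lt_succ_iff.mp i.2) hnlt
  set q : Fin (n+1) → A := fun i => φ h' ⟨i.1, hq i⟩ with hqdef
  have hinj : Function.Injective q := by
    intro i j hij
    have h1 := (hφ h').1 hij
    have h2 : (i : ℕ) = (j : ℕ) := congrArg (Fin.val : Fin (Fintype.card A) → ℕ) h1
    exact Fin.ext h2
  have hpos : (n+1) - 1 < n+1 := by omega
  have hmkeq : (⟨(n+1)-1, hq ⟨(n+1)-1, hpos⟩⟩ : Fin (Fintype.card A)) = idx h' :=
    Fin.ext (by simpa using hn.symm)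
  have hlast : q ⟨(n+1)-1, hpos⟩ = a := by
    show φ h' ⟨(n+1)-1, hq ⟨(n+1)-1, hpos⟩⟩ = a
    rw [hmkeq]; exact hidx h'
  set X : Set (Ω × ∀ c, U c) :=
    {g | ∀ b : {b : A // b ∈ Ap},
      b.1 ∈ predRange (⟨n+1, q⟩ : Σ k : ℕ, Fin k → A) → (lam b).1 g = g.2 b.1} with hXdef
  have hXfield : X ∈ genField
      (⋃ b ∈ predRange (⟨n+1, q⟩ : Σ k : ℕ, Fin k → A) ∩ Ap, cylField Ω U b ∪ I b) := by
    have hXeq : X = ⋂ b ∈ (Finset.univ : Finset {b : A // b ∈ Ap}),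
        {g : Ω × ∀ c, U c |
          b.1 ∈ predRange (⟨n+1, q⟩ : Σ k : ℕ, Fin k → A) → (lam b).1 g = g.2 b.1} := by
      ext g; simp [hXdef]
    rw [hXeq]
    apply (isSetField_genField _).biInter'
    intro b _
    by_cases hb : b.1 ∈ predRange (⟨n+1, q⟩ : Σ k : ℕ, Fin k → A)
    · have heq : {g : Ω × ∀ c, U c |
          b.1 ∈ predRange (⟨n+1, q⟩ : Σ k : ℕ, Fin k → A) → (lam b).1 g = g.2 b.1}
          = ⋃ u ∈ (Finset.univ : Finset (U b.1)),
              ((lam b).1 ⁻¹' {u} ∩ {g : Ω × ∀ c, U c | g.2 b.1 = u}) := by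
        ext g
        simp only [Set.mem_setOf_eq, Set.mem_iUnion, Finset.mem_univ, Set.mem_inter_iff,
          Set.mem_preimage, Set.mem_singleton_iff, exists_true_left, hb, true_implies,
          exists_and_left]
        constructor
        · intro hg; exact ⟨(lam b).1 g, rfl, hg.symm⟩
        · rintro ⟨u, h1, h2⟩; rw [h1, h2]
      rw [heq]
      apply (isSetField_genField _).biUnion'
      intro u _
      apply (isSetField_genField _).inter'
      · apply subset_genField
        exact Set.mem_biUnion ⟨hb, b.2⟩ (Or.inr ((lam b).2 u))
      · apply subset_genField
        refine Set.mem_biUnion ⟨hb, b.2⟩ (Or.inl ⟨{u}, ?_⟩)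
        ext g; simp
    · have heq : {g : Ω × ∀ c, U c |
          b.1 ∈ predRange (⟨n+1, q⟩ : Σ k : ℕ, Fin k → A) → (lam b).1 g = g.2 b.1}
          = Set.univ := by
        ext g; simp [hb]
      rw [heq]
      exact (isSetField_genField _).1
  have hE : Hset φ ⟨n+1, q⟩ ∩ X ∈ I a := by
    have h1 := hpr ⟨n+1, q⟩ hinj hpos (by rw [show ((⟨n+1, q⟩ : Σ k : ℕ, Fin k → A)).2
      ⟨(⟨n+1, q⟩ : Σ k : ℕ, Fin k → A).1 - 1, hpos⟩ = a from hlast]; exact ha) X hXfield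
    rwa [show ((⟨n+1, q⟩ : Σ k : ℕ, Fin k → A)).2
      ⟨(⟨n+1, q⟩ : Σ k : ℕ, Fin k → A).1 - 1, hpos⟩ = a from hlast] at h1
  have hmem' : h' ∈ Hset φ (⟨n+1, q⟩ : Σ k : ℕ, Fin k → A) ∩ X := by
    constructor
    · intro i; exact ⟨hq i, rfl⟩
    · intro b hb
      obtain ⟨i, hi1, hi2⟩ := hb
      refine hcnd b ⟨⟨i.1, hq i⟩, ?_, hi2⟩
      have : (i : ℕ) < n := by simpa using hi1
      exact this
  have hmem'' : h'' ∈ Hset φ (⟨n+1, q⟩ : Σ k : ℕ, Fin k → A) ∩ X :=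
    atom_mem_trans (hI a) hG hE hh' hmem' hh''
  obtain ⟨hH'', hX''⟩ := hmem''
  have hkey : (idx h'').1 = n := by
    obtain ⟨hi, heq⟩ := hH'' ⟨n, Nat.lt_succ_self n⟩
    have h1 : q ⟨n, Nat.lt_succ_self n⟩ = a := by
      show φ h' ⟨n, hq ⟨n, Nat.lt_succ_self n⟩⟩ = a
      have hmk : (⟨n, hq ⟨n, Nat.lt_succ_self n⟩⟩ : Fin (Fintype.card A)) = idx h' :=
        Fin.ext hn.symm
      rw [hmk]; exact hidx h'
    have heq' : q ⟨n, Nat.lt_succ_self n⟩ = φ h'' ⟨n, hi⟩ := heq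
    have h2 : φ h'' ⟨n, hi⟩ = φ h'' (idx h'') := by rw [← heq', h1, hidx h'']
    have h3 := (hφ h'').1 h2
    exact (congrArg Fin.val h3).symm
  intro b hb
  obtain ⟨j, hj1, hj2⟩ := hb
  have hjn : (j : ℕ) < n := by
    have h4 := Fin.lt_def.mp hj1
    omega
  have hjlt : (j : ℕ) < n + 1 := by omega
  obtain ⟨hi, heq⟩ := hH'' ⟨j.1, hjlt⟩
  apply hX'' b
  refine ⟨⟨j.1, hjlt⟩, ?_, ?_⟩
  · show (j : ℕ) < (n+1) - 1
    omega
  · have heq' : q ⟨j.1, hjlt⟩ = φ h'' ⟨j.1, hi⟩ := heq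
    show q ⟨j.1, hjlt⟩ = b.1
    rw [heq']
    have hmk : (⟨j.1, hi⟩ : Fin (Fintype.card A)) = j := Fin.ext rfl
    rw [hmk]; exact hj2

end Aux

theorem mixed_induces_behavioral_under_perfect_recall
    {Ω A : Type*} [Fintype Ω] [Fintype A] {U : A → Type*} [∀ c, Fintype (U c)]
    (I : A → Set (Set (Ω × ∀ c, U c))) (hI : ∀ c, IsSetField (I c))
    (φ : (Ω × ∀ c, U c) → Fin (Fintype.card A) → A)
    (hφ : ∀ h, Function.Bijective (φ h))
    (hc : Causal φ I) (Ap : Set A) (hpr : PerfectRecall φ I Ap)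
    (a : A) (ha : a ∈ Ap)
    (idx : (Ω × ∀ c, U c) → Fin (Fintype.card A))
    (hidx : ∀ h, φ h (idx h) = a)
    (μp : ProfT Ω U I Ap → ℝ)
    (hμp : (∀ lam, 0 ≤ μp lam) ∧ ∑ lam, μp lam = 1)
    (β : U a → (Ω × ∀ c, U c) → ℝ)
    (hβ : ∀ u h, β u h =
      if denom I Ap μp φ idx h = 0 then 0
      else numer I Ap μp φ idx a ha u h / denom I Ap μp φ idx h) :
    (∀ u : U a, ∀ G : Set (Ω × ∀ c, U c), IsSetAtom (I a) G →
      ∀ h' ∈ G, ∀ h'' ∈ G, β u h' = β u h'') ∧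
    (∀ h, 0 < denom I Ap μp φ idx h → ∑ u, β u h = 1) := by
  have cond_iff : ∀ (G : Set (Ω × ∀ c, U c)), IsSetAtom (I a) G →
      ∀ h' ∈ G, ∀ h'' ∈ G, ∀ lam : ProfT Ω U I Ap,
      ((∀ b : {b : A // b ∈ Ap},
        (∃ i, i < idx h' ∧ φ h' i = b.1) → (lam b).1 h' = h'.2 b.1) ↔
       (∀ b : {b : A // b ∈ Ap},
        (∃ i, i < idx h'' ∧ φ h'' i = b.1) → (lam b).1 h'' = h''.2 b.1)) := by
    intro G hG h' hG' h'' hG'' lam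
    exact ⟨cond_transfer I hI φ hφ Ap hpr a ha idx hidx lam G hG h' h'' hG' hG'',
           cond_transfer I hI φ hφ Ap hpr a ha idx hidx lam G hG h'' h' hG'' hG'⟩
  constructor
  · intro u G hG h' hG' h'' hG''
    have hden : denom I Ap μp φ idx h' = denom I Ap μp φ idx h'' := by
      unfold denom
      refine Finset.sum_congr rfl fun lam _ => ?_
      exact if_congr (cond_iff G hG h' hG' h'' hG'' lam) rfl rfl
    have hnum : numer I Ap μp φ idx a ha u h' = numer I Ap μp φ idx a ha u h'' := by
      unfold numer
      refine Finset.sum_congr rfl fun lam _ => ?_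
      refine if_congr (and_congr ?_ (cond_iff G hG h' hG' h'' hG'' lam)) rfl rfl
      have hK : (lam ⟨a, ha⟩).1 ⁻¹' {u} ∈ I a := (lam ⟨a, ha⟩).2 u
      constructor
      · intro hh; exact atom_mem_trans (hI a) hG hK hG' hh hG''
      · intro hh; exact atom_mem_trans (hI a) hG hK hG'' hh hG'
    rw [hβ, hβ, hden, hnum]
  · intro h hd
    have hne : denom I Ap μp φ idx h ≠ 0 := ne_of_gt hd
    have hsum : ∑ u, numer I Ap μp φ idx a ha u h = denom I Ap μp φ idx h := by
      unfold numer denom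
      rw [Finset.sum_comm]
      refine Finset.sum_congr rfl fun lam _ => ?_
      by_cases hC : ∀ b : {b : A // b ∈ Ap},
          (∃ i, i < idx h ∧ φ h i = b.1) → (lam b).1 h = h.2 b.1
      · rw [if_pos hC]
        have e1 : ∀ u : U a,
            (((lam ⟨a, ha⟩).1 h = u ∧ ∀ b : {b : A // b ∈ Ap},
              (∃ i, i < idx h ∧ φ h i = b.1) → (lam b).1 h = h.2 b.1)) ↔
            ((lam ⟨a, ha⟩).1 h = u) := fun u => and_iff_left hC
        calc (∑ u : U a, if ((lam ⟨a, ha⟩).1 h = u ∧ ∀ b : {b : A // b ∈ Ap},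
              (∃ i, i < idx h ∧ φ h i = b.1) → (lam b).1 h = h.2 b.1)
              then μp lam else 0)
            = ∑ u : U a, if (lam ⟨a, ha⟩).1 h = u then μp lam else 0 :=
              Finset.sum_congr rfl fun u _ => if_congr (e1 u) rfl rfl
          _ = μp lam := by rw [Finset.sum_ite_eq]; simp
      · rw [if_neg hC]
        refine Finset.sum_eq_zero fun u _ => ?_
        exact if_neg fun hh => hC hh.2
    calc ∑ u, β u h
        = ∑ u, numer I Ap μp φ idx a ha u h / denom I Ap μp φ idx h := by
          refine Finset.sum_congr rfl fun u _ => ?_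
          rw [hβ, if_neg hne]
      _ = (∑ u, numer I Ap μp φ idx a ha u h) / denom I Ap μp φ idx h := by
          rw [Finset.sum_div]
      _ = 1 := by rw [hsum, div_self hne]
end

section
/- Kuhn's equivalence theorem for W-games: consider a causal and solvable finite W-game, and a player p enjoying perfect recall. Then for every mixed W-strategy μ^p ∈ Δ(Λ^p) there exists a product-mixed W-strategy π^p = ⊗_{a∈A^p} π_a with π_a ∈ Δ(Λ_a), such that for every choice of mixed strategies μ^{-p} of the other players and every ω ∈ Ω, the pushforward distributions on ∏_{b∈A} U_b coincide: Q^ω_{(μ^{-p}, μ^p)} = Q^ω_{(μ^{-p}, π^p)}, where Q^ω_ν is the pushforward of the product probability ν on Λ = ∏_q Λ^q under the solution map λ ↦ M_λ(ω). -/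
open scoped BigOperators
attribute [local instance] Classical.propDecidable

/-!
Given the mixed strategy `μ` of the player, let the behavior of agent `a` at a configuration
`h` be the `μ`-conditional law of the decision `λ_a(h)`, given that `λ` reproduces the
decisions `h` records for the agents of the player who play before `a` in `h`. Perfect recall
makes the conditioning event, hence the behavior, depend only on the `I a`-atom of `h`, so
drawing independently on each atom is a mixed strategy `π_a` of the agent `a`. By the chain
rule, the `μ`-probability that `λ` reproduces all the decisions of the player recorded in `h`
is the product of the behaviors at `h`, which is also the `⊗ π_a`-probability of that event.
Solvability turns the event `M_λ(ω) = u` into the conjunction of this event at `(ω, u)` and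
the corresponding event for the other players, so both pushforwards factor through these
reproduction probabilities.
-/

namespace IsSetField

variable {D : Type*} {F : Set (Set D)}

theorem empty_mem (hF : IsSetField F) : ∅ ∈ F := by
  simpa using hF.2.1 _ hF.1

theorem sUnion_mem [Finite D] (hF : IsSetField F) {S : Set (Set D)} (hS : S ⊆ F) :
    ⋃₀ S ∈ F := by
  induction S, S.toFinite using Set.Finite.induction_on with
  | empty => simpa using hF.empty_mem
  | @insert X S _ _ ih =>
    rw [Set.sUnion_insert]
    exact hF.2.2 _ (hS (Set.mem_insert X S)) _ (ih ((Set.subset_insert X S).trans hS))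

theorem sInter_mem [Finite D] (hF : IsSetField F) {S : Set (Set D)} (hS : S ⊆ F) :
    ⋂₀ S ∈ F := by
  rw [← compl_compl (⋂₀ S), Set.compl_sInter]
  exact hF.2.1 _ (hF.sUnion_mem (Set.image_subset_iff.mpr fun X hX => hF.2.1 X (hS hX)))

end IsSetField

theorem univ_mem_genField {D : Type*} (S : Set (Set D)) : Set.univ ∈ genField S :=
  fun _ hF _ => hF.1

theorem mem_genField_of_mem {D : Type*} {S : Set (Set D)} {X : Set D} (hX : X ∈ S) :
    X ∈ genField S :=
  fun _ _ hS => hS hX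

section Atoms

variable {D : Type*} {F : Set (Set D)}

def atomOf (F : Set (Set D)) (h : D) : Set D :=
  ⋂₀ {X | X ∈ F ∧ h ∈ X}

theorem mem_atomOf_iff {h h' : D} : h' ∈ atomOf F h ↔ ∀ X ∈ F, h ∈ X → h' ∈ X := by
  simp [atomOf]

theorem mem_atomOf_self (h : D) : h ∈ atomOf F h :=
  mem_atomOf_iff.mpr fun _ _ hX => hX

theorem mem_of_mem_atomOf {X : Set D} (hX : X ∈ F) {h h' : D} (hh : h ∈ X)
    (hh' : h' ∈ atomOf F h) : h' ∈ X :=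
  mem_atomOf_iff.mp hh' X hX hh

theorem mem_atomOf_trans {h h' h'' : D} (h₁ : h' ∈ atomOf F h) (h₂ : h'' ∈ atomOf F h') :
    h'' ∈ atomOf F h :=
  mem_atomOf_iff.mpr fun _ hX hhX => mem_of_mem_atomOf hX (mem_of_mem_atomOf hX hhX h₁) h₂

theorem IsSetField.mem_atomOf_comm (hF : IsSetField F) {h h' : D} (hh : h' ∈ atomOf F h) :
    h ∈ atomOf F h' :=
  mem_atomOf_iff.mpr fun X hX hh'X => by
    by_contra hhX
    exact mem_of_mem_atomOf (hF.2.1 X hX) hhX hh hh'X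

theorem IsSetField.atomOf_mem [Finite D] (hF : IsSetField F) (h : D) : atomOf F h ∈ F :=
  hF.sInter_mem fun _ hX => hX.1

theorem Meas.apply_eq_of_mem_atomOf {α : Type*} {f : D → α} (hf : Meas F f) {h h' : D}
    (hh : h' ∈ atomOf F h) : f h' = f h :=
  mem_of_mem_atomOf (hf (f h)) rfl hh

theorem IsSetField.meas_of_apply_eq [Finite D] (hF : IsSetField F) {α : Type*} {f : D → α}
    (hf : ∀ h, ∀ h' ∈ atomOf F h, f h' = f h) : Meas F f := by
  intro x
  have hfib : f ⁻¹' {x} = ⋃₀ (atomOf F '' (f ⁻¹' {x})) := by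
    ext h'
    simp only [Set.sUnion_image, Set.mem_iUnion, Set.mem_preimage, Set.mem_singleton_iff,
      exists_prop]
    exact ⟨fun hx => ⟨h', hx, mem_atomOf_self h'⟩, fun ⟨h, hx, hh'⟩ => (hf h h' hh').trans hx⟩
  rw [hfib]
  exact hF.sUnion_mem (Set.image_subset_iff.mpr fun h _ => hF.atomOf_mem h)

def IsSetField.atomSetoid (hF : IsSetField F) : Setoid D where
  r h h' := h' ∈ atomOf F h
  iseqv := ⟨mem_atomOf_self, hF.mem_atomOf_comm, mem_atomOf_trans⟩

def IsSetField.measEquiv [Finite D] (hF : IsSetField F) (α : Type*) :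
    {f : D → α // Meas F f} ≃ (Quotient hF.atomSetoid → α) where
  toFun f := Quotient.lift f.1 fun _ _ hr => (f.2.apply_eq_of_mem_atomOf hr).symm
  invFun g := ⟨fun h => g ⟦h⟧, hF.meas_of_apply_eq fun _ _ hr =>
    congrArg g (Quotient.sound (hF.mem_atomOf_comm hr))⟩
  left_inv _ := rfl
  right_inv _ := funext fun q => Quotient.inductionOn q fun _ => rfl

@[simp]
theorem IsSetField.measEquiv_symm_apply_coe [Finite D] (hF : IsSetField F) {α : Type*}
    (g : Quotient hF.atomSetoid → α) (h : D) : ((hF.measEquiv α).symm g).1 h = g ⟦h⟧ :=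
  rfl

end Atoms

section Weights

variable {X : Type*} [Fintype X]

noncomputable def mass (μ : X → ℝ) (S : Set X) : ℝ :=
  ∑ x, if x ∈ S then μ x else 0

theorem mass_nonneg {μ : X → ℝ} (hμ : ∀ x, 0 ≤ μ x) (S : Set X) : 0 ≤ mass μ S :=
  Finset.sum_nonneg fun x _ => by split_ifs <;> simp [hμ x]

theorem mass_mono {μ : X → ℝ} (hμ : ∀ x, 0 ≤ μ x) {S T : Set X} (hST : S ⊆ T) :
    mass μ S ≤ mass μ T :=
  Finset.sum_le_sum fun x _ => by
    by_cases hS : x ∈ S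
    · simp [hS, hST hS]
    · by_cases hT : x ∈ T <;> simp [hS, hT, hμ x]

theorem mass_univ (μ : X → ℝ) : mass μ Set.univ = ∑ x, μ x := by
  simp [mass]

theorem sum_mass_fiber_inter {V : Type*} [Fintype V] (μ : X → ℝ) (g : X → V) (S : Set X) :
    ∑ v, mass μ ({x | g x = v} ∩ S) = mass μ S := by
  unfold mass
  rw [Finset.sum_comm]
  refine Finset.sum_congr rfl fun x _ => ?_
  simp only [Set.mem_inter_iff, Set.mem_ofPred_eq, ite_and]
  rw [Finset.sum_ite_eq]
  simp

/-- The conditional law of `g` given `T`, taken uniform when `T` is null so that it is always a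
probability. -/
noncomputable def condLaw {V : Type*} [Fintype V] (μ : X → ℝ) (T : Set X) (g : X → V)
    (v : V) : ℝ :=
  if mass μ T = 0 then (Fintype.card V : ℝ)⁻¹ else mass μ ({x | g x = v} ∩ T) / mass μ T

variable {V : Type*} [Fintype V]

theorem condLaw_nonneg {μ : X → ℝ} (hμ : ∀ x, 0 ≤ μ x) (T : Set X) (g : X → V) (v : V) :
    0 ≤ condLaw μ T g v := by
  unfold condLaw
  split_ifs
  · positivity
  · exact div_nonneg (mass_nonneg hμ _) (mass_nonneg hμ _)

theorem sum_condLaw [Nonempty V] (μ : X → ℝ) (T : Set X) (g : X → V) :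
    ∑ v, condLaw μ T g v = 1 := by
  unfold condLaw
  split_ifs with hT
  · simp
  · rw [← Finset.sum_div, sum_mass_fiber_inter, div_self hT]

theorem mass_fiber_inter_eq_condLaw_mul {μ : X → ℝ} (hμ : ∀ x, 0 ≤ μ x) (T : Set X)
    (g : X → V) (v : V) :
    mass μ ({x | g x = v} ∩ T) = condLaw μ T g v * mass μ T := by
  unfold condLaw
  split_ifs with hT
  · rw [hT, mul_zero]
    exact le_antisymm (hT ▸ mass_mono hμ Set.inter_subset_right) (mass_nonneg hμ _)
  · rw [div_mul_cancel₀ _ hT]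

end Weights

section ProductWeights

variable {Q : Type*} [Fintype Q] [DecidableEq Q]

theorem sum_ite_forall_prod_eq_prod_sum {κ : Q → Type*} [∀ q, Fintype (κ q)] (P : ∀ q, κ q → Prop)
    (β : ∀ q, κ q → ℝ) :
    ∑ g : ∀ q, κ q, (if ∀ q, P q (g q) then ∏ q, β q (g q) else 0) =
      ∏ q, ∑ w, if P q w then β q w else 0 := by
  rw [Fintype.prod_sum]
  exact Finset.sum_congr rfl fun g _ => Fintype.prod_ite_zero.symm

variable {V : Type*} [Fintype V] {β : Q → V → ℝ}

theorem sum_prod_eq_one (hβ : ∀ q, ∑ v, β q v = 1) : ∑ g : Q → V, ∏ q, β q (g q) = 1 := by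
  rw [← Fintype.prod_sum, Finset.prod_eq_one fun q _ => hβ q]

theorem sum_ite_apply_eq_prod (hβ : ∀ q, ∑ v, β q v = 1) (q₀ : Q) (v₀ : V) :
    ∑ g : Q → V, (if g q₀ = v₀ then ∏ q, β q (g q) else 0) = β q₀ v₀ := by
  have h := sum_ite_forall_prod_eq_prod_sum (fun q v => q = q₀ → v = v₀) β
  simp only [forall_eq] at h
  rw [h, Fintype.prod_eq_single q₀ fun q hq => by simp [hq, hβ q]]
  simp

end ProductWeights

section PlayOrder

variable {Ω A : Type*} {U : A → Type*} [Fintype A]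
  {φ : (Ω × ∀ c, U c) → Fin (Fintype.card A) → A}

noncomputable def stage (hφ : ∀ h, Function.Bijective (φ h)) (h : Ω × ∀ c, U c) (a : A) :
    Fin (Fintype.card A) :=
  (Equiv.ofBijective (φ h) (hφ h)).symm a

noncomputable def playPrefix (hφ : ∀ h, Function.Bijective (φ h)) (h : Ω × ∀ c, U c)
    (a : A) : Σ k : ℕ, Fin k → A :=
  ⟨stage hφ h a + 1, fun i => φ h (Fin.castLE (stage hφ h a).isLt i)⟩

theorem apply_stage (hφ : ∀ h, Function.Bijective (φ h)) (h : Ω × ∀ c, U c) (a : A) :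
    φ h (stage hφ h a) = a :=
  (Equiv.ofBijective (φ h) (hφ h)).apply_symm_apply a

variable {hφ : ∀ h, Function.Bijective (φ h)} {h : Ω × ∀ c, U c} {a b : A}

theorem stage_eq_iff {i : Fin (Fintype.card A)} : stage hφ h a = i ↔ a = φ h i :=
  (Equiv.ofBijective (φ h) (hφ h)).symm_apply_eq

theorem stage_lt_succ_iff {k : ℕ} (hk : k < Fintype.card A) :
    (stage hφ h b : ℕ) < k + 1 ↔ (stage hφ h b : ℕ) < k ∨ b = φ h ⟨k, hk⟩ := by
  rw [Nat.lt_succ_iff_lt_or_eq, ← stage_eq_iff, Fin.ext_iff]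

theorem playPrefix_injective : Function.Injective (playPrefix hφ h a).2 :=
  (hφ h).1.comp (Fin.castLE_injective _)

theorem playPrefix_last_lt : (playPrefix hφ h a).1 - 1 < (playPrefix hφ h a).1 := by
  simp [playPrefix]

@[simp]
theorem playPrefix_last : (playPrefix hφ h a).2 ⟨_, playPrefix_last_lt⟩ = a := by
  simpa [playPrefix] using apply_stage hφ h a

theorem mem_Hset_playPrefix : h ∈ Hset φ (playPrefix hφ h a) :=
  fun _ => ⟨_, rfl⟩

theorem mem_predRange_playPrefix (hlt : stage hφ h b < stage hφ h a) :
    b ∈ predRange (playPrefix hφ h a) :=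
  ⟨⟨stage hφ h b, by simp [playPrefix]; omega⟩, by simp [playPrefix]; omega,
    apply_stage hφ h b⟩

end PlayOrder

namespace PerfectRecall

variable {Ω A : Type*} {U : A → Type*} [Fintype A]
  {φ : (Ω × ∀ c, U c) → Fin (Fintype.card A) → A} {hφ : ∀ h, Function.Bijective (φ h)}
  {I : A → Set (Set (Ω × ∀ c, U c))} {Ap : Set A} {h h' : Ω × ∀ c, U c} {a b : A}

theorem mem_inter_of_mem_atomOf (hpr : PerfectRecall φ I Ap) (ha : a ∈ Ap)
    {X : Set (Ω × ∀ c, U c)}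
    (hX : X ∈ genField (⋃ b ∈ predRange (playPrefix hφ h a) ∩ Ap, cylField Ω U b ∪ I b))
    (hhX : h ∈ X) (hh' : h' ∈ atomOf (I a) h) : h' ∈ Hset φ (playPrefix hφ h a) ∩ X := by
  have hmem := hpr _ playPrefix_injective playPrefix_last_lt (by simpa using ha) X hX
  rw [playPrefix_last] at hmem
  exact mem_of_mem_atomOf hmem ⟨mem_Hset_playPrefix, hhX⟩ hh'

theorem apply_eq_of_mem_atomOf (hpr : PerfectRecall φ I Ap) (ha : a ∈ Ap)
    (hh' : h' ∈ atomOf (I a) h) {i : Fin (Fintype.card A)} (hi : i ≤ stage hφ h a) :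
    φ h' i = φ h i := by
  obtain ⟨_, heq⟩ :=
    (hpr.mem_inter_of_mem_atomOf ha (univ_mem_genField _) trivial hh').1
      ⟨i, by simp [playPrefix]; omega⟩
  exact heq.symm

theorem stage_eq_iff_of_mem_atomOf (hpr : PerfectRecall φ I Ap) (ha : a ∈ Ap)
    (hh' : h' ∈ atomOf (I a) h) {i : Fin (Fintype.card A)} (hi : i ≤ stage hφ h a) :
    stage hφ h' b = i ↔ stage hφ h b = i := by
  rw [stage_eq_iff, stage_eq_iff, hpr.apply_eq_of_mem_atomOf ha hh' hi]

theorem mem_of_mem_atomOf_of_stage_lt (hpr : PerfectRecall φ I Ap) (ha : a ∈ Ap) (hb : b ∈ Ap)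
    (hlt : stage hφ h b < stage hφ h a) {X : Set (Ω × ∀ c, U c)}
    (hX : X ∈ cylField Ω U b ∪ I b) (hhX : h ∈ X) (hh' : h' ∈ atomOf (I a) h) : h' ∈ X :=
  (hpr.mem_inter_of_mem_atomOf ha
    (mem_genField_of_mem (Set.mem_biUnion ⟨mem_predRange_playPrefix hlt, hb⟩ hX)) hhX hh').2

theorem decision_eq_of_mem_atomOf (hpr : PerfectRecall φ I Ap) (ha : a ∈ Ap) (hb : b ∈ Ap)
    (hlt : stage hφ h b < stage hφ h a) (hh' : h' ∈ atomOf (I a) h) : h'.2 b = h.2 b :=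
  hpr.mem_of_mem_atomOf_of_stage_lt ha hb hlt (X := {h'' | h''.2 b ∈ ({h.2 b} : Set (U b))})
    (Or.inl ⟨_, rfl⟩) rfl hh'

theorem apply_eq_of_mem_atomOf_of_stage_lt (hpr : PerfectRecall φ I Ap) (ha : a ∈ Ap)
    (hb : b ∈ Ap) (hlt : stage hφ h b < stage hφ h a) {f : (Ω × ∀ c, U c) → U b}
    (hf : Meas (I b) f) (hh' : h' ∈ atomOf (I a) h) : f h' = f h :=
  hpr.mem_of_mem_atomOf_of_stage_lt ha hb hlt (Or.inr (hf (f h))) rfl hh'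

end PerfectRecall

section Behavior

variable {Ω A : Type*} [Fintype A] {U : A → Type*}
  {I : A → Set (Set (Ω × ∀ c, U c))} {φ : (Ω × ∀ c, U c) → Fin (Fintype.card A) → A}
  {hφ : ∀ h, Function.Bijective (φ h)} {s : A → Prop}

abbrev AgentStrategy (I : A → Set (Set (Ω × ∀ c, U c))) (a : A) : Type _ :=
  {f : (Ω × ∀ c, U c) → U a // Meas (I a) f}

variable (I s) in
def consistentBefore (hφ : ∀ h, Function.Bijective (φ h)) (h : Ω × ∀ c, U c) (k : ℕ) :
    Set (∀ a : {a // s a}, AgentStrategy I a.1) :=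
  {lam | ∀ b : {a // s a}, (stage hφ h b.1 : ℕ) < k → (lam b).1 h = h.2 b.1}

theorem consistentBefore_zero (h : Ω × ∀ c, U c) :
    consistentBefore I s hφ h 0 = Set.univ := by
  simp [consistentBefore]

theorem consistentBefore_succ_of_pos (h : Ω × ∀ c, U c) {k : ℕ} (hk : k < Fintype.card A)
    (hs : s (φ h ⟨k, hk⟩)) :
    consistentBefore I s hφ h (k + 1) =
      {lam | (lam ⟨_, hs⟩).1 h = h.2 (φ h ⟨k, hk⟩)} ∩ consistentBefore I s hφ h k := by
  ext lam
  simp only [consistentBefore, stage_lt_succ_iff hk, Set.mem_inter_iff, Set.mem_ofPred_eq]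
  constructor
  · exact fun hlam => ⟨hlam _ (Or.inr rfl), fun b hb => hlam b (Or.inl hb)⟩
  · rintro ⟨hnow, hbefore⟩ ⟨b, hb⟩ (hlt | rfl)
    exacts [hbefore _ hlt, hnow]

theorem consistentBefore_succ_of_neg (h : Ω × ∀ c, U c) {k : ℕ} (hk : k < Fintype.card A)
    (hs : ¬ s (φ h ⟨k, hk⟩)) :
    consistentBefore I s hφ h (k + 1) = consistentBefore I s hφ h k := by
  ext lam
  simp only [consistentBefore, stage_lt_succ_iff hk, Set.mem_ofPred_eq]
  refine ⟨fun hlam b hb => hlam b (Or.inl hb), fun hlam b => ?_⟩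
  rintro (hb | hb)
  exacts [hlam b hb, absurd (hb ▸ b.2) hs]

variable [Fintype Ω] [∀ c, Fintype (U c)]

noncomputable def behaviorProb (hφ : ∀ h, Function.Bijective (φ h))
    (μ : (∀ a : {a // s a}, AgentStrategy I a.1) → ℝ) (h : Ω × ∀ c, U c) (a : {a // s a})
    (v : U a.1) : ℝ :=
  condLaw μ (consistentBefore I s hφ h (stage hφ h a.1)) (fun lam => (lam a).1 h) v

variable {μ : (∀ a : {a // s a}, AgentStrategy I a.1) → ℝ}

theorem mass_consistentBefore (hμ : ∀ x, 0 ≤ μ x) (hμ₁ : ∑ x, μ x = 1)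
    (h : Ω × ∀ c, U c) {k : ℕ} (hk : k ≤ Fintype.card A) :
    mass μ (consistentBefore I s hφ h k) =
      ∏ b ∈ Finset.univ.filter fun b : {a // s a} => (stage hφ h b.1 : ℕ) < k,
        behaviorProb hφ μ h b (h.2 b.1) := by
  induction k with
  | zero => simp [consistentBefore_zero, mass_univ, hμ₁]
  | succ k ih =>
    have hk' : k < Fintype.card A := hk
    by_cases hs : s (φ h ⟨k, hk'⟩)
    · have hstage : stage hφ h (φ h ⟨k, hk'⟩) = ⟨k, hk'⟩ := stage_eq_iff.mpr rfl
      have hfilter : Finset.univ.filter (fun b : {a // s a} => (stage hφ h b.1 : ℕ) < k + 1) =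
          insert ⟨_, hs⟩ (Finset.univ.filter fun b : {a // s a} => (stage hφ h b.1 : ℕ) < k) := by
        ext b
        simp [stage_lt_succ_iff hk', Subtype.ext_iff, or_comm]
      rw [consistentBefore_succ_of_pos h hk' hs, hfilter,
        Finset.prod_insert (by simp [hstage]), ← ih hk'.le,
        mass_fiber_inter_eq_condLaw_mul hμ, behaviorProb, hstage]
    · have hfilter : Finset.univ.filter (fun b : {a // s a} => (stage hφ h b.1 : ℕ) < k + 1) =
          Finset.univ.filter fun b : {a // s a} => (stage hφ h b.1 : ℕ) < k := by
        ext b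
        simp only [Finset.mem_filter, Finset.mem_univ, true_and, stage_lt_succ_iff hk',
          or_iff_left_iff_imp]
        exact fun hb => absurd (hb ▸ b.2) hs
      rw [consistentBefore_succ_of_neg h hk' hs, hfilter, ih hk'.le]

end Behavior

section Recall

variable {Ω A : Type*} [Fintype A] {U : A → Type*}
  {I : A → Set (Set (Ω × ∀ c, U c))} {φ : (Ω × ∀ c, U c) → Fin (Fintype.card A) → A}
  {hφ : ∀ h, Function.Bijective (φ h)} {s : A → Prop} {h h' : Ω × ∀ c, U c}

theorem consistentBefore_subset_of_mem_atomOf (hpr : PerfectRecall φ I {a | s a})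
    (a : {a // s a}) (hh' : h' ∈ atomOf (I a.1) h) :
    consistentBefore I s hφ h (stage hφ h a.1) ⊆
      consistentBefore I s hφ h' (stage hφ h' a.1) := by
  have hstage_a : stage hφ h' a.1 = stage hφ h a.1 :=
    (hpr.stage_eq_iff_of_mem_atomOf a.2 hh' le_rfl).mpr rfl
  intro lam hlam b hb
  rw [hstage_a] at hb
  have hstage_b : stage hφ h b.1 = stage hφ h' b.1 :=
    (hpr.stage_eq_iff_of_mem_atomOf a.2 hh' (le_of_lt hb)).mp rfl
  have hlt : stage hφ h b.1 < stage hφ h a.1 := hstage_b ▸ hb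
  rw [hpr.apply_eq_of_mem_atomOf_of_stage_lt a.2 b.2 hlt (lam b).2 hh', hlam b hlt,
    hpr.decision_eq_of_mem_atomOf a.2 b.2 hlt hh']

variable [Fintype Ω] [∀ c, Fintype (U c)] {μ : (∀ a : {a // s a}, AgentStrategy I a.1) → ℝ}

theorem behaviorProb_eq_of_mem_atomOf (hI : ∀ c, IsSetField (I c))
    (hpr : PerfectRecall φ I {a | s a}) {a : {a // s a}} (hh' : h' ∈ atomOf (I a.1) h)
    (v : U a.1) : behaviorProb hφ μ h' a v = behaviorProb hφ μ h a v := by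
  have hevent : consistentBefore I s hφ h' (stage hφ h' a.1) =
      consistentBefore I s hφ h (stage hφ h a.1) :=
    (consistentBefore_subset_of_mem_atomOf hpr a ((hI a.1).mem_atomOf_comm hh')).antisymm
      (consistentBefore_subset_of_mem_atomOf hpr a hh')
  have hdecision : (fun lam : ∀ a : {a // s a}, AgentStrategy I a.1 => (lam a).1 h') =
      fun lam => (lam a).1 h :=
    funext fun lam => (lam a).2.apply_eq_of_mem_atomOf hh'
  rw [behaviorProb, behaviorProb, hevent, hdecision]

end Recall

section BehaviorStrategy

variable {Ω A : Type*} [Fintype Ω] [Fintype A] {U : A → Type*} [∀ c, Fintype (U c)]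
  {I : A → Set (Set (Ω × ∀ c, U c))} {φ : (Ω × ∀ c, U c) → Fin (Fintype.card A) → A}
  {hφ : ∀ h, Function.Bijective (φ h)} {s : A → Prop} {hI : ∀ c, IsSetField (I c)}
  {μ : (∀ a : {a // s a}, AgentStrategy I a.1) → ℝ}

noncomputable def behaviorStrategy (hφ : ∀ h, Function.Bijective (φ h))
    (hI : ∀ c, IsSetField (I c)) (μ : (∀ a : {a // s a}, AgentStrategy I a.1) → ℝ)
    (a : {a // s a}) (f : AgentStrategy I a.1) : ℝ :=
  ∏ q : Quotient (hI a.1).atomSetoid, behaviorProb hφ μ q.out a (f.1 q.out)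

theorem behaviorStrategy_nonneg (hμ : ∀ x, 0 ≤ μ x) (a : {a // s a})
    (f : AgentStrategy I a.1) : 0 ≤ behaviorStrategy hφ hI μ a f :=
  Finset.prod_nonneg fun _ _ => condLaw_nonneg hμ _ _ _

theorem behaviorStrategy_measEquiv_symm (a : {a // s a})
    (g : Quotient (hI a.1).atomSetoid → U a.1) :
    behaviorStrategy hφ hI μ a (((hI a.1).measEquiv (U a.1)).symm g) =
      ∏ q, behaviorProb hφ μ q.out a (g q) :=
  Finset.prod_congr rfl fun q _ => congrArg _ (congrArg g q.out_eq)

theorem sum_behaviorProb (h : Ω × ∀ c, U c) (a : {a // s a}) :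
    ∑ v, behaviorProb hφ μ h a v = 1 :=
  have : Nonempty (U a.1) := ⟨h.2 a.1⟩
  sum_condLaw _ _ _

theorem sum_behaviorStrategy (a : {a // s a}) :
    ∑ f, behaviorStrategy hφ hI μ a f = 1 := by
  rw [← ((hI a.1).measEquiv (U a.1)).symm.sum_comp]
  simp only [behaviorStrategy_measEquiv_symm]
  exact sum_prod_eq_one (Q := Quotient (hI a.1).atomSetoid) fun q => sum_behaviorProb q.out a

theorem sum_ite_behaviorStrategy (hpr : PerfectRecall φ I {a | s a}) (h : Ω × ∀ c, U c)
    (a : {a // s a}) (v : U a.1) :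
    ∑ f : AgentStrategy I a.1, (if f.1 h = v then behaviorStrategy hφ hI μ a f else 0) =
      behaviorProb hφ μ h a v := by
  rw [← ((hI a.1).measEquiv (U a.1)).symm.sum_comp]
  simp only [behaviorStrategy_measEquiv_symm, IsSetField.measEquiv_symm_apply_coe]
  rw [sum_ite_apply_eq_prod (Q := Quotient (hI a.1).atomSetoid)
    (fun q => sum_behaviorProb q.out a) ⟦h⟧ v]
  exact (behaviorProb_eq_of_mem_atomOf hI hpr (Quotient.mk_out (s := (hI a.1).atomSetoid) h) v).symm

variable (μ) in
noncomputable def reproductionProb (h : Ω × ∀ c, U c) : ℝ :=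
  ∑ lam : ∀ a : {a // s a}, AgentStrategy I a.1, if ∀ a, (lam a).1 h = h.2 a.1 then μ lam else 0

theorem reproductionProb_behaviorStrategy (hμ : ∀ x, 0 ≤ μ x) (hμ₁ : ∑ x, μ x = 1)
    (hpr : PerfectRecall φ I {a | s a}) (h : Ω × ∀ c, U c) :
    reproductionProb μ h =
      reproductionProb (fun lam => ∏ a, behaviorStrategy hφ hI μ a (lam a)) h :=
  calc reproductionProb μ h
      = mass μ (consistentBefore I s hφ h (Fintype.card A)) := by
        simp [reproductionProb, mass, consistentBefore]
    _ = ∏ a, behaviorProb hφ μ h a (h.2 a.1) := by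
        rw [mass_consistentBefore hμ hμ₁ h le_rfl]
        simp
    _ = ∏ a, ∑ f : AgentStrategy I a.1,
          if f.1 h = h.2 a.1 then behaviorStrategy hφ hI μ a f else 0 := by
        simp only [sum_ite_behaviorStrategy hpr]
    _ = _ := (sum_ite_forall_prod_eq_prod_sum _ _).symm

end BehaviorStrategy

theorem solution_eq_iff {Ω A : Type*} {U : A → Type*} {Λ : A → Type*}
    {apply : ∀ a, Λ a → (Ω × ∀ c, U c) → U a} {M : (∀ a, Λ a) → Ω → ∀ a, U a}
    (hM : ∀ lam ω, ∀ a, apply a (lam a) (ω, M lam ω) = M lam ω a)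
    (hMuniq : ∀ lam ω (u : ∀ a, U a), (∀ a, apply a (lam a) (ω, u) = u a) → u = M lam ω)
    (lam : ∀ a, Λ a) (ω : Ω) (u : ∀ a, U a) :
    M lam ω = u ↔ ∀ a, apply a (lam a) (ω, u) = u a :=
  ⟨fun hu => hu ▸ hM lam ω, fun hu => (hMuniq lam ω u hu).symm⟩

theorem sum_ite_forall_mul_split {A : Type*} {κ : A → Type*} [Fintype A] [∀ a, Fintype (κ a)]
    [DecidableEq A] (s : A → Prop) [DecidablePred s] (P : ∀ a, κ a → Prop)
    (W : (∀ a : {a // s a}, κ a) → ℝ) (O : (∀ a : {a // ¬ s a}, κ a) → ℝ) :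
    ∑ lam : ∀ a, κ a, (if ∀ a, P a (lam a) then W (fun a => lam a) * O (fun a => lam a) else 0) =
      (∑ w, if ∀ a, P a.1 (w a) then W w else 0) * ∑ o, if ∀ a, P a.1 (o a) then O o else 0 := by
  rw [Finset.sum_mul_sum, ← Fintype.sum_prod_type', ← (Equiv.piEquivPiSubtypeProd s κ).sum_comp]
  refine Finset.sum_congr rfl fun lam _ => ?_
  have hsplit : (∀ a, P a (lam a)) ↔
      (∀ a : {a // s a}, P a (lam a)) ∧ ∀ a : {a // ¬ s a}, P a (lam a) :=
    ⟨fun h => ⟨fun a => h a, fun a => h a⟩,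
      fun h a => if ha : s a then h.1 ⟨a, ha⟩ else h.2 ⟨a, ha⟩⟩
  simp only [Equiv.piEquivPiSubtypeProd_apply, hsplit, ite_and]
  split_ifs <;> simp

theorem kuhn_equivalence_for_W_games_general
    {Ω A P : Type*} [Fintype Ω] [Fintype A] [Fintype P]
    {U : A → Type*} [∀ c, Fintype (U c)]
    (pl : A → P)
    (I : A → Set (Set (Ω × ∀ c, U c))) (hI : ∀ c, IsSetField (I c))
    (φ : (Ω × ∀ c, U c) → Fin (Fintype.card A) → A)
    (hφ : ∀ h, Function.Bijective (φ h))
    (p : P) (hpr : PerfectRecall φ I {a : A | pl a = p})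
    -- solvability: `M` is the solution map of the closed-loop equations
    (M : (∀ a : A, {f : (Ω × ∀ c, U c) → U a // Meas (I a) f}) → Ω → ∀ a, U a)
    (hM : ∀ lam ω, ∀ a : A, (lam a).1 (ω, M lam ω) = M lam ω a)
    (hMuniq : ∀ lam ω (u : ∀ a, U a), (∀ a : A, (lam a).1 (ω, u) = u a) → u = M lam ω)
    -- a mixed W-strategy of player `p`
    (μp : (∀ a : {a : A // pl a = p},
        {f : (Ω × ∀ c, U c) → U a.1 // Meas (I a.1) f}) → ℝ)
    (hμp : (∀ x, 0 ≤ μp x) ∧ ∑ x, μp x = 1) :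
    -- there is a product-mixed W-strategy of player `p` inducing, whatever the mixed
    -- strategies of the other players, the same pushforward distribution on decisions
    ∃ π : ∀ a : {a : A // pl a = p},
        ({f : (Ω × ∀ c, U c) → U a.1 // Meas (I a.1) f} → ℝ),
      (∀ a, (∀ x, 0 ≤ π a x) ∧ ∑ x, π a x = 1) ∧
      ∀ μo : ∀ q : {q : P // q ≠ p},
          ((∀ a : {a : A // pl a = q.1},
            {f : (Ω × ∀ c, U c) → U a.1 // Meas (I a.1) f}) → ℝ),
        (∀ q, (∀ x, 0 ≤ μo q x) ∧ ∑ x, μo q x = 1) →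
        ∀ (ω : Ω) (u : ∀ a, U a),
          (∑ lam : ∀ a : A, {f : (Ω × ∀ c, U c) → U a // Meas (I a) f},
            if M lam ω = u then
              μp (fun a => lam a.1) *
                ∏ q : {q : P // q ≠ p}, μo q (fun a => lam a.1)
            else 0)
          =
          (∑ lam : ∀ a : A, {f : (Ω × ∀ c, U c) → U a // Meas (I a) f},
            if M lam ω = u then
              (∏ a : {a : A // pl a = p}, π a (lam a.1)) *
                ∏ q : {q : P // q ≠ p}, μo q (fun a => lam a.1)
            else 0) := by
  refine ⟨behaviorStrategy hφ hI μp, fun a => ⟨behaviorStrategy_nonneg hμp.1 a,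
    sum_behaviorStrategy a⟩, fun μo _ ω u => ?_⟩
  simp only [solution_eq_iff hM hMuniq]
  have hsplit := sum_ite_forall_mul_split (fun a => pl a = p)
    (fun a (f : AgentStrategy I a) => f.1 (ω, u) = u a)
    (O := fun o => ∏ q : {q : P // q ≠ p},
      μo q fun a => o ⟨a.1, fun ha => q.2 (a.2.symm.trans ha)⟩)
  rw [hsplit μp, hsplit fun lam => ∏ a, behaviorStrategy hφ hI μp a (lam a)]
  congr 1
  exact reproductionProb_behaviorStrategy hμp.1 hμp.2 hpr (ω, u)

theorem kuhn_equivalence_for_W_games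
    {Ω A P : Type*} [Fintype Ω] [Fintype A] [Fintype P]
    {U : A → Type*} [∀ c, Fintype (U c)]
    (pl : A → P)
    (I : A → Set (Set (Ω × ∀ c, U c))) (hI : ∀ c, IsSetField (I c))
    (φ : (Ω × ∀ c, U c) → Fin (Fintype.card A) → A)
    (hφ : ∀ h, Function.Bijective (φ h))
    (hc : Causal φ I)
    (p : P) (hpr : PerfectRecall φ I {a : A | pl a = p})
    -- solvability: `M` is the solution map of the closed-loop equations
    (M : (∀ a : A, {f : (Ω × ∀ c, U c) → U a // Meas (I a) f}) → Ω → ∀ a, U a)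
    (hM : ∀ lam ω, ∀ a : A, (lam a).1 (ω, M lam ω) = M lam ω a)
    (hMuniq : ∀ lam ω (u : ∀ a, U a), (∀ a : A, (lam a).1 (ω, u) = u a) → u = M lam ω)
    -- a mixed W-strategy of player `p`
    (μp : (∀ a : {a : A // pl a = p},
        {f : (Ω × ∀ c, U c) → U a.1 // Meas (I a.1) f}) → ℝ)
    (hμp : (∀ x, 0 ≤ μp x) ∧ ∑ x, μp x = 1) :
    -- there is a product-mixed W-strategy of player `p` inducing, whatever the mixed
    -- strategies of the other players, the same pushforward distribution on decisions
    ∃ π : ∀ a : {a : A // pl a = p},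
        ({f : (Ω × ∀ c, U c) → U a.1 // Meas (I a.1) f} → ℝ),
      (∀ a, (∀ x, 0 ≤ π a x) ∧ ∑ x, π a x = 1) ∧
      ∀ μo : ∀ q : {q : P // q ≠ p},
          ((∀ a : {a : A // pl a = q.1},
            {f : (Ω × ∀ c, U c) → U a.1 // Meas (I a.1) f}) → ℝ),
        (∀ q, (∀ x, 0 ≤ μo q x) ∧ ∑ x, μo q x = 1) →
        ∀ (ω : Ω) (u : ∀ a, U a),
          (∑ lam : ∀ a : A, {f : (Ω × ∀ c, U c) → U a // Meas (I a) f},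
            if M lam ω = u then
              μp (fun a => lam a.1) *
                ∏ q : {q : P // q ≠ p}, μo q (fun a => lam a.1)
            else 0)
          =
          (∑ lam : ∀ a : A, {f : (Ω × ∀ c, U c) → U a // Meas (I a) f},
            if M lam ω = u then
              (∏ a : {a : A // pl a = p}, π a (lam a.1)) *
                ∏ q : {q : P // q ≠ p}, μo q (fun a => lam a.1)
            else 0) :=
  kuhn_equivalence_for_W_games_general pl I hI φ hφ p hpr M hM hMuniq μp hμp
end

section
/- In a finite W-game, for any mixed W-strategies profile μ = (μ^q)_{q∈P} on a solvable W-model and any configuration h = (ω, (u_b)_{b∈A}), the pushforward probability satisfies Q^ω_μ((u_b)_{b∈A}) = ∏_{q∈P} μ^q{ (λ_a)_{a∈A^q} ∈ Λ^q : λ_a(h) = u_a ∀ a ∈ A^q }. -/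
open scoped BigOperators
attribute [local instance] Classical.propDecidable

theorem pushforward_factorizes_over_players
    {Ω A P : Type*} [Fintype Ω] [Fintype A] [Fintype P]
    {U : A → Type*} [∀ c, Fintype (U c)]
    (pl : A → P)
    (I : A → Set (Set (Ω × ∀ c, U c))) (hI : ∀ c, IsSetField (I c))
    -- solvability: `M` is the solution map of the closed-loop equations
    (M : (∀ a : A, {f : (Ω × ∀ c, U c) → U a // Meas (I a) f}) → Ω → ∀ a, U a)
    (hM : ∀ lam ω, ∀ a : A, (lam a).1 (ω, M lam ω) = M lam ω a)
    (hMuniq : ∀ lam ω (u : ∀ a, U a), (∀ a : A, (lam a).1 (ω, u) = u a) → u = M lam ω)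
    -- a mixed W-strategies profile, one mixed strategy per player
    (μ : ∀ q : P, ((∀ a : {a : A // pl a = q},
        {f : (Ω × ∀ c, U c) → U a.1 // Meas (I a.1) f}) → ℝ))
    (hμ : ∀ q, (∀ x, 0 ≤ μ q x) ∧ ∑ x, μ q x = 1) :
    ∀ (ω : Ω) (u : ∀ a, U a),
      (∑ lam : ∀ a : A, {f : (Ω × ∀ c, U c) → U a // Meas (I a) f},
        if M lam ω = u then ∏ q : P, μ q (fun a => lam a.1) else 0)
      =
      ∏ q : P,
        ∑ lamq : ∀ a : {a : A // pl a = q},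
            {f : (Ω × ∀ c, U c) → U a.1 // Meas (I a.1) f},
          if (∀ a : {a : A // pl a = q}, (lamq a).1 (ω, u) = u a.1)
          then μ q lamq else 0 := by
  intro ω u
  classical
  have key : ∀ lam : ∀ a : A, {f : (Ω × ∀ c, U c) → U a // Meas (I a) f},
      (M lam ω = u) ↔ ∀ a, (lam a).1 (ω, u) = u a :=
    fun lam => ⟨fun h a => h ▸ hM lam ω a, fun h => (hMuniq lam ω u h).symm⟩
  rw [Finset.prod_univ_sum]
  refine (Fintype.sum_bijective
      (fun (g : ∀ q : P, ∀ a : {a : A // pl a = q},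
          {f : (Ω × ∀ c, U c) → U a.1 // Meas (I a.1) f}) (a : A) => g (pl a) ⟨a, rfl⟩)
      ?_ _ _ ?_).symm
  · refine Function.bijective_iff_has_inverse.mpr ⟨fun lam q a => lam a.1, ?_, ?_⟩
    · intro g; funext q a; obtain ⟨a, rfl⟩ := a; rfl
    · intro lam; rfl
  · intro x
    simp only [key]
    by_cases hall : ∀ a : A, (x (pl a) ⟨a, rfl⟩).1 (ω, u) = u a
    · rw [if_pos hall]
      refine Finset.prod_congr rfl fun q _ => ?_
      rw [if_pos (fun a => ?_)]
      · congr 1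
        funext a
        obtain ⟨a, rfl⟩ := a
        rfl
      · obtain ⟨a, rfl⟩ := a
        exact hall a
    · rw [if_neg hall]
      push_neg at hall
      obtain ⟨a, ha⟩ := hall
      refine Finset.prod_eq_zero (Finset.mem_univ (pl a)) ?_
      exact if_neg (fun hc => ha (hc ⟨a, rfl⟩))
end
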